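/- Let T be a complete theory in a countable language L containing <, 0, S with a partial definable binary function F as in the standing assumptions. Then Γ^sind_F-bigness is a notion of bigness for T: for every model M ⊨ T and all formulas φ(x, ȳ), ψ(x, ȳ): (1) if ∀x(φ → ψ) holds and φ is Γ^sind_F-big then ψ is Γ^sind_F-big; (2) if φ ∨ ψ is Γ^sind_F-big then φ is Γ^sind_F-big or ψ is Γ^sind_F-big; (3) if φ is Γ^sind_F-big then φ has at least two solutions in M; (4) the formula x = x is Γ^sind_F-big. -/

import Mathlib

open FirstOrder Language Structure

/-- The interpretation of the distinguished binary relation symbol `<`. -/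
def ltI (L : Language) (ltS : L.Relations 2) {M : Type} [L.Structure M] (a b : M) : Prop :=
  Structure.RelMap ltS ![a, b]

/-- The interpretation of the distinguished constant symbol `0`. -/
def zeroI (L : Language) (zeroS : L.Constants) (M : Type) [L.Structure M] : M :=
  Structure.funMap zeroS ![]

/-- The interpretation of the distinguished unary function symbol `S`. -/
def succI (L : Language) (succS : L.Functions 1) {M : Type} [L.Structure M] (a : M) : M :=
  Structure.funMap succS ![a]

/-- The interpretations `Sⁿ(0)` of the "numerals". -/
def stdI (L : Language) (zeroS : L.Constants) (succS : L.Functions 1)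
    (M : Type) [L.Structure M] : ℕ → M
  | 0 => zeroI L zeroS M
  | n + 1 => succI L succS (stdI L zeroS succS M n)

/-- The standing assumptions: `L` is a countable first-order language containing `<`,
`0` and `S`; `T` is a complete `L`-theory; `Fg(x, y, z)` defines the graph of a partial
binary function `F(x, y)`; and `T` proves (equivalently, since `T` is complete, every
model of `T` satisfies): the partial functionality of `F`; `<` is a linear order with
first element `0`; `S x` is the immediate `<`-successor of `x`; and, for each `n ∈ ω`,
for all pairwise distinct `y₁, …, yₙ` and all `z₁, …, zₙ` there exists `x` with
`F(x, yᵢ) = zᵢ` for all `i ≤ n`. -/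
def StandingAssumptions (L : Language) (ltS : L.Relations 2) (zeroS : L.Constants)
    (succS : L.Functions 1) (T : L.Theory) (Fg : L.Formula (Fin 3)) : Prop :=
  Countable L.Symbols ∧ T.IsComplete ∧
    ∀ (M : Type) [L.Structure M], M ⊨ T →
      (∀ x y z z' : M, Fg.Realize ![x, y, z] → Fg.Realize ![x, y, z'] → z = z') ∧
      ((∀ x : M, ¬ ltI L ltS x x) ∧
       (∀ x y z : M, ltI L ltS x y → ltI L ltS y z → ltI L ltS x z) ∧
       (∀ x y : M, ltI L ltS x y ∨ x = y ∨ ltI L ltS y x) ∧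
       (∀ x : M, x = zeroI L zeroS M ∨ ltI L ltS (zeroI L zeroS M) x)) ∧
      (∀ x : M, ltI L ltS x (succI L succS x) ∧
        ∀ y : M, ltI L ltS x y → succI L succS x = y ∨ ltI L ltS (succI L succS x) y) ∧
      (∀ (n : ℕ) (ys : Fin n → M), Function.Injective ys → ∀ zs : Fin n → M,
        ∃ x : M, ∀ i, Fg.Realize ![x, ys i, zs i])

/-- `(M, I) ⊨ ψ*(P)`: the set `I` is a cut (nonempty proper initial segment closed
under `S`), and for no `x` and `z ∈ I` is the set `{F(x, y) : y} ∩ I` unbounded in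
`I`, i.e. `∀x∀z[P(z) → ∃w(P(w) ∧ ∀y(P(F(x,y)) → F(x,y) < w))]` (with the partial
function `F` given by its graph `Fg`). -/
def PsiStar (L : Language) (ltS : L.Relations 2) (zeroS : L.Constants)
    (succS : L.Functions 1) (Fg : L.Formula (Fin 3))
    (M : Type) [L.Structure M] (I : Set M) : Prop :=
  (I ≠ Set.univ ∧ zeroI L zeroS M ∈ I ∧
    (∀ x y : M, y ∈ I → ltI L ltS x y → x ∈ I) ∧
    ∀ x ∈ I, succI L succS x ∈ I) ∧
  ∀ x z : M, z ∈ I → ∃ w ∈ I, ∀ y v : M, Fg.Realize ![x, y, v] → v ∈ I → ltI L ltS v w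

/-- `M` is `ψ*`-appropriate: `M ≠ {Sⁿ(0) : n ∈ ω}`, and whenever `(M, I) ⊨ ψ*(P)`,
either `I = {Sⁿ(0) : n ∈ ω}` or `I` is definable in `M` by an `L`-formula with
parameters. -/
def PsiAppropriate (L : Language) (ltS : L.Relations 2) (zeroS : L.Constants)
    (succS : L.Functions 1) (Fg : L.Formula (Fin 3)) (M : Type) [L.Structure M] : Prop :=
  Set.range (stdI L zeroS succS M) ≠ Set.univ ∧
    ∀ I : Set M, PsiStar L ltS zeroS succS Fg M I →
      I = Set.range (stdI L zeroS succS M) ∨ Set.Definable₁ (Set.univ : Set M) L I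


/-- `N` is `ℵ₁`-saturated (equivalently `|T|⁺`-saturated, for a complete theory `T`
in a countable language): every finitely satisfiable set of formulas in one free
variable with parameters from a countable subset `A ⊆ N` is satisfiable in `N`. -/
def AlephOneSaturated (L : Language) (N : Type) [L.Structure N] : Prop :=
  ∀ A : Set N, A.Countable →
    ∀ S : Set (L.Formula (↥A ⊕ Fin 1)),
      (∀ S₀ : Finset (L.Formula (↥A ⊕ Fin 1)), ↑S₀ ⊆ S →
        ∃ x : N, ∀ φ ∈ S₀, Formula.Realize φ (Sum.elim Subtype.val fun _ => x)) →
      ∃ x : N, ∀ φ ∈ S, Formula.Realize φ (Sum.elim Subtype.val fun _ => x)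

/-- The witnessing condition for `Γ^sind_F`-bigness of the formula `φ(x, ā)` (with
parameters `ā` from `M`) in a given elementary extension `e : M ≺ N`: there is a set
`A ⊆ N` with `|A| ≤ |T| (= ℵ₀)` such that for any finitely many pairwise distinct
`a₁, …, aₙ ∈ N \ A` and any `b₁, …, bₙ ∈ N` there is `x` with
`N ⊨ φ(x, ā) ∧ ⋀ᵢ F(x, aᵢ) = bᵢ` (the partial function `F` given by its graph `Fg`). -/
def BigWitness (L : Language) (Fg : L.Formula (Fin 3)) {M N : Type}
    [L.Structure M] [L.Structure N] (e : M ↪ₑ[L] N) {k : ℕ}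
    (φ : L.Formula (Fin k ⊕ Fin 1)) (a : Fin k → M) : Prop :=
  ∃ A : Set N, A.Countable ∧
    ∀ (n : ℕ) (as : Fin n → N), Function.Injective as → (∀ i, as i ∉ A) →
      ∀ bs : Fin n → N, ∃ x : N,
        Formula.Realize φ (Sum.elim (fun i => e (a i)) fun _ => x) ∧
        ∀ i, Fg.Realize ![x, as i, bs i]

/-- `φ(x, ā)` is `Γ^sind_F`-big in `M`: in some `|T|⁺`-saturated elementary extension
`N ≻ M` the witnessing condition holds. -/
def IsBig (L : Language) (Fg : L.Formula (Fin 3)) (M : Type) [L.Structure M] {k : ℕ}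
    (φ : L.Formula (Fin k ⊕ Fin 1)) (a : Fin k → M) : Prop :=
  ∃ (N : Type) (_ : L.Structure N) (e : M ↪ₑ[L] N),
    AlephOneSaturated L N ∧ BigWitness L Fg e φ a

/-!
Items (2) and (3) are argued inside the saturated extension `N` witnessing bigness.
If neither `φ` nor `ψ` is big, the countable set `A` witnessing bigness of `φ ∨ ψ` is
defeated for `φ` by finitely many conditions `F(x, aᵢ) = bᵢ` with `aᵢ ∉ A`, and
`A ∪ {aᵢ}` is defeated for `ψ` by further conditions; the two lists of conditions
together defeat `A` for `φ ∨ ψ`. A big formula has two solutions because `N` is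
uncountable, so some `c ∉ A` exists, and the solutions with `F(x, c) = b₁` and with
`F(x, c) = b₂ ≠ b₁` differ; elementarity brings them down to `M`.

For `x = x`, the ultrapower of `M` by a nonprincipal ultrafilter on `ℕ` is `ℵ₁`-saturated,
and there the independence axiom for `F` gives bigness with `A = ∅`.
-/

open Filter

theorem Filter.exists_forall_eventually_of_le_atTop {β : ℕ → Type*} [∀ j, Nonempty (β j)]
    {l : Filter ℕ} (hl : l ≤ atTop) {P : ℕ → (j : ℕ) → β j → Prop}
    (h : ∀ n, ∀ᶠ j in l, ∃ c, ∀ i ≤ n, P i j c) :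
    ∃ y : (j : ℕ) → β j, ∀ n, ∀ᶠ j in l, P n j (y j) := by
  classical
  let Q (n j : ℕ) : Prop := ∃ c, ∀ i ≤ n, P i j c
  -- at coordinate `j`, satisfy as many of `P 0 j, …, P j j` as possible
  let m (j : ℕ) : ℕ := Nat.findGreatest (Q · j) j
  refine ⟨fun j => Classical.epsilon fun c => ∀ i ≤ m j, P i j c, fun n => ?_⟩
  filter_upwards [h n, hl (eventually_ge_atTop n)] with j hQ hnj
  exact Classical.epsilon_spec (p := fun c => ∀ i ≤ m j, P i j c)
    (Nat.findGreatest_spec (P := (Q · j)) hnj hQ) n (Nat.le_findGreatest hnj hQ)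

namespace FirstOrder.Language

namespace ElementaryEmbedding

variable {L : Language} {M N : Type*} [L.Structure M] [L.Structure N] (e : M ↪ₑ[L] N)
  {α : Type*} {a : α → M}

theorem realize_of_forall_realize {φ : L.Formula (α ⊕ Fin 1)}
    (h : ∀ x : M, φ.Realize (Sum.elim a fun _ => x)) (x : N) :
    φ.Realize (Sum.elim (e ∘ a) fun _ => x) := by
  have hM : (φ.iAlls (Fin 1)).Realize a := by
    rw [Formula.realize_iAlls]
    intro v
    rw [show v = fun _ => v 0 from funext fun i => congrArg v (Subsingleton.elim i 0)]
    exact h (v 0)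
  rw [← e.map_formula, Formula.realize_iAlls] at hM
  exact hM fun _ => x

theorem exists_ne_realize_of_realize {φ : L.Formula (α ⊕ Fin 1)} {x₁ x₂ : N} (hne : x₁ ≠ x₂)
    (h₁ : φ.Realize (Sum.elim (e ∘ a) fun _ => x₁))
    (h₂ : φ.Realize (Sum.elim (e ∘ a) fun _ => x₂)) :
    ∃ y₁ y₂ : M, y₁ ≠ y₂ ∧ φ.Realize (Sum.elim a fun _ => y₁) ∧
      φ.Realize (Sum.elim a fun _ => y₂) := by
  let χ : L.Formula α :=
    ((φ.relabel (Sum.map id fun _ => 0) ⊓ φ.relabel (Sum.map id fun _ => 1)) ⊓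
      ∼((Term.var (Sum.inr 0)).equal (Term.var (Sum.inr 1)))).iExs (Fin 2)
  have hN : χ.Realize (e ∘ a) := by
    simp only [χ, Formula.realize_iExs]
    refine ⟨![x₁, x₂], ?_⟩
    simp only [Formula.realize_inf, Formula.realize_relabel, Formula.realize_not,
      Formula.realize_equal, Term.realize_var, Sum.elim_comp_map, Function.comp_id]
    exact ⟨⟨h₁, h₂⟩, hne⟩
  obtain ⟨y, hy⟩ := Formula.realize_iExs.1 ((e.map_formula χ a).1 hN)
  simp only [Formula.realize_inf, Formula.realize_relabel, Formula.realize_not,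
    Formula.realize_equal, Term.realize_var, Sum.elim_comp_map, Function.comp_id] at hy
  exact ⟨y 0, y 1, hy.2, hy.1⟩

end ElementaryEmbedding

namespace Ultraproduct

variable {L : Language}

def diagonalEmbedding {ι : Type*} (M : Type*) [L.Structure M] [Nonempty M] (u : Ultrafilter ι) :
    M ↪ₑ[L] (u : Filter ι).Product fun _ => M where
  toFun m := ((fun _ => m : ι → M) : (u : Filter ι).Product fun _ => M)
  map_formula' _ φ x := (realize_formula_cast φ fun i _ => x i).trans eventually_const

theorem alephOneSaturated [Countable L.Symbols] {M : ℕ → Type} [∀ j, L.Structure (M j)]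
    [∀ j, Nonempty (M j)] {u : Ultrafilter ℕ} (hu : (u : Filter ℕ) ≤ atTop) :
    AlephOneSaturated L ((u : Filter ℕ).Product M) := by
  classical
  intro A hA S hS
  have : Countable A := hA.to_subtype
  rcases S.eq_empty_or_nonempty with rfl | hne
  · exact ⟨Classical.arbitrary _, by simp⟩
  obtain ⟨f, rfl⟩ := S.to_countable.exists_eq_range hne
  choose rep hrep using fun a : A => Quotient.exists_rep a.1
  have los (φ : L.Formula (A ⊕ Fin 1)) (y : ∀ j, M j) :
      φ.Realize (Sum.elim Subtype.val fun _ => (y : (u : Filter ℕ).Product M)) ↔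
        ∀ᶠ j in u, φ.Realize (Sum.elim (fun a => rep a j) fun _ => y j) := by
    have hval : (Sum.elim Subtype.val fun _ => y : A ⊕ Fin 1 → (u : Filter ℕ).Product M) =
        fun i => ((Sum.elim rep (fun _ => y) i : ∀ j, M j) : (u : Filter ℕ).Product M) := by
      ext (a | _)
      exacts [(hrep a).symm, rfl]
    rw [hval]
    refine (realize_formula_cast φ _).trans (eventually_congr (.of_forall fun j => ?_))
    rw [iff_iff_eq]
    congr
    ext (_ | _) <;> rfl
  obtain ⟨y, hy⟩ := Filter.exists_forall_eventually_of_le_atTop hu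
    (P := fun i j c => (f i).Realize (Sum.elim (fun a => rep a j) fun _ => c)) fun n => by
    obtain ⟨x, hx⟩ := hS ((Finset.range (n + 1)).image f) (by simp)
    obtain ⟨x, rfl⟩ := Quotient.exists_rep x
    have := (eventually_all_finset (Finset.range (n + 1))).2 fun i hi =>
      (los _ x).1 (hx _ (Finset.mem_image_of_mem f hi))
    filter_upwards [this] with j hj
    exact ⟨x j, fun i hi => hj i (Finset.mem_range_succ_iff.2 hi)⟩
  exact ⟨y, Set.forall_mem_range.2 fun n => (los _ y).2 (hy n)⟩

end Ultraproduct

end FirstOrder.Language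

theorem StandingAssumptions.infinite {L : Language} {ltS : L.Relations 2} {zeroS : L.Constants}
    {succS : L.Functions 1} {T : L.Theory} {Fg : L.Formula (Fin 3)}
    (h : StandingAssumptions L ltS zeroS succS T Fg) (N : Type) [L.Structure N] (hN : N ⊨ T) :
    Infinite N := by
  obtain ⟨-, ⟨hirr, htrans, -, -⟩, hsucc, -⟩ := h.2.2 N hN
  have : Std.Irrefl (ltI L ltS (M := N)) := ⟨hirr⟩
  have : IsTrans N (ltI L ltS) := ⟨htrans⟩
  exact Infinite.of_injective _ <| injective_of_increasing (· < ·) (ltI L ltS) _ fun hlt =>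
    Nat.rel_of_forall_rel_succ_of_lt _ (f := stdI L zeroS succS N) (fun _ => (hsucc _).1) hlt

theorem StandingAssumptions.isBig_of_forall_realize {L : Language} {ltS : L.Relations 2}
    {zeroS : L.Constants} {succS : L.Functions 1} {T : L.Theory} {Fg : L.Formula (Fin 3)}
    (h : StandingAssumptions L ltS zeroS succS T Fg) {M : Type} [L.Structure M] (hM : M ⊨ T)
    {k : ℕ} {φ : L.Formula (Fin k ⊕ Fin 1)} {a : Fin k → M}
    (hφ : ∀ x : M, φ.Realize (Sum.elim a fun _ => x)) : IsBig L Fg M φ a := by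
  have : Nonempty M := ⟨zeroI L zeroS M⟩
  have : Countable L.Symbols := h.1
  let e := Ultraproduct.diagonalEmbedding (L := L) M (hyperfilter ℕ)
  have hN := (e.theory_model_iff T).1 hM
  refine ⟨_, _, e, Ultraproduct.alephOneSaturated Nat.hyperfilter_le_atTop, ∅, Set.countable_empty,
    fun n as hinj _ bs => ?_⟩
  obtain ⟨-, -, -, hindep⟩ := h.2.2 _ hN
  obtain ⟨x, hx⟩ := hindep n as hinj bs
  exact ⟨x, e.realize_of_forall_realize hφ x, hx⟩

theorem AlephOneSaturated.exists_notMem {L : Language} {N : Type} [L.Structure N] [Infinite N]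
    (hsat : AlephOneSaturated L N) {A : Set N} (hA : A.Countable) : ∃ x, x ∉ A := by
  classical
  let avoid (a : A) : L.Formula (A ⊕ Fin 1) :=
    ∼((Term.var (Sum.inl a)).equal (Term.var (Sum.inr 0)))
  obtain ⟨x, hx⟩ := hsat A hA (Set.range avoid) fun S₀ hS₀ => by
    rw [← Set.image_univ, Finset.subset_set_image_iff] at hS₀
    obtain ⟨s, -, rfl⟩ := hS₀
    obtain ⟨x, hx⟩ := Infinite.exists_notMem_finset (s.image Subtype.val)
    refine ⟨x, Finset.forall_mem_image.2 fun a ha => ?_⟩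
    simp only [avoid, Formula.realize_not, Formula.realize_equal, Term.realize_var, Sum.elim_inl,
      Sum.elim_inr]
    exact fun hax => hx (hax ▸ Finset.mem_image_of_mem _ ha)
  exact ⟨x, fun hxA => by simpa [avoid] using hx _ ⟨⟨x, hxA⟩, rfl⟩⟩

section BigWitness

variable {L : Language} {Fg : L.Formula (Fin 3)} {M N : Type} [L.Structure M] [L.Structure N]
  {e : M ↪ₑ[L] N} {k : ℕ} {a : Fin k → M}

theorem BigWitness.mono {φ ψ : L.Formula (Fin k ⊕ Fin 1)}
    (h : ∀ x : M, φ.Realize (Sum.elim a fun _ => x) → ψ.Realize (Sum.elim a fun _ => x))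
    (hφ : BigWitness L Fg e φ a) : BigWitness L Fg e ψ a := by
  obtain ⟨A, hA, hwit⟩ := hφ
  refine ⟨A, hA, fun n as hinj hout bs => ?_⟩
  obtain ⟨x, hx, hF⟩ := hwit n as hinj hout bs
  exact ⟨x, e.realize_of_forall_realize (φ := φ.imp ψ) (fun y => Formula.realize_imp.2 (h y)) x hx,
    hF⟩

theorem BigWitness.or_of_sup {φ ψ : L.Formula (Fin k ⊕ Fin 1)}
    (h : BigWitness L Fg e (φ ⊔ ψ) a) : BigWitness L Fg e φ a ∨ BigWitness L Fg e ψ a := by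
  by_contra! ⟨hφ, hψ⟩
  obtain ⟨A, hA, hwit⟩ := h
  simp only [BigWitness, not_exists, not_and, not_forall] at hφ hψ
  obtain ⟨n₁, as₁, hinj₁, hout₁, bs₁, hno₁⟩ := hφ A hA
  obtain ⟨n₂, as₂, hinj₂, hout₂, bs₂, hno₂⟩ :=
    hψ (A ∪ Set.range as₁) (hA.union (Set.finite_range as₁).countable)
  have hinj : (Fin.append as₁ as₂).Injective :=
    Fin.append_injective_iff.2 ⟨hinj₁, hinj₂, fun i j hij => hout₂ j (Or.inr ⟨i, hij⟩)⟩
  have hout : ∀ i, Fin.append as₁ as₂ i ∉ A := by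
    rw [Fin.forall_fin_add]
    simp only [Fin.append_left, Fin.append_right]
    exact ⟨hout₁, fun j hj => hout₂ j (Or.inl hj)⟩
  obtain ⟨x, hx, hF⟩ := hwit _ _ hinj hout (Fin.append bs₁ bs₂)
  simp only [Fin.forall_fin_add, Fin.append_left, Fin.append_right] at hF
  rcases Formula.realize_sup.1 hx with hx | hx
  · obtain ⟨i, hi⟩ := hno₁ x hx
    exact hi (hF.1 i)
  · obtain ⟨i, hi⟩ := hno₂ x hx
    exact hi (hF.2 i)

theorem BigWitness.exists_ne_realize [Infinite N] (hsat : AlephOneSaturated L N)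
    (hFg : ∀ x y z z' : N, Fg.Realize ![x, y, z] → Fg.Realize ![x, y, z'] → z = z')
    {φ : L.Formula (Fin k ⊕ Fin 1)} (hφ : BigWitness L Fg e φ a) :
    ∃ y₁ y₂ : M, y₁ ≠ y₂ ∧ φ.Realize (Sum.elim a fun _ => y₁) ∧
      φ.Realize (Sum.elim a fun _ => y₂) := by
  obtain ⟨A, hA, hwit⟩ := hφ
  obtain ⟨c, hc⟩ := hsat.exists_notMem hA
  obtain ⟨b₁, b₂, hb⟩ := exists_pair_ne N
  obtain ⟨x₁, hx₁, hF₁⟩ := hwit 1 (fun _ => c) (Function.injective_of_subsingleton _)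
    (fun _ => hc) fun _ => b₁
  obtain ⟨x₂, hx₂, hF₂⟩ := hwit 1 (fun _ => c) (Function.injective_of_subsingleton _)
    (fun _ => hc) fun _ => b₂
  -- `F(x₁, c) = b₁ ≠ b₂ = F(x₂, c)`
  refine e.exists_ne_realize_of_realize (fun hx => hb ?_) hx₁ hx₂
  exact hFg x₁ c b₁ b₂ (hF₁ 0) (hx ▸ hF₂ 0)

end BigWitness

section IsBig

variable {L : Language} {Fg : L.Formula (Fin 3)} {M : Type} [L.Structure M] {k : ℕ}
  {a : Fin k → M}

theorem IsBig.mono {φ ψ : L.Formula (Fin k ⊕ Fin 1)}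
    (h : ∀ x : M, φ.Realize (Sum.elim a fun _ => x) → ψ.Realize (Sum.elim a fun _ => x))
    (hφ : IsBig L Fg M φ a) : IsBig L Fg M ψ a :=
  let ⟨N, _, e, hsat, hw⟩ := hφ
  ⟨N, _, e, hsat, hw.mono h⟩

theorem IsBig.or_of_sup {φ ψ : L.Formula (Fin k ⊕ Fin 1)} (h : IsBig L Fg M (φ ⊔ ψ) a) :
    IsBig L Fg M φ a ∨ IsBig L Fg M ψ a :=
  let ⟨N, _, e, hsat, hw⟩ := h
  hw.or_of_sup.imp (fun hw => ⟨N, _, e, hsat, hw⟩) fun hw => ⟨N, _, e, hsat, hw⟩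

theorem IsBig.exists_ne_realize {ltS : L.Relations 2} {zeroS : L.Constants}
    {succS : L.Functions 1} {T : L.Theory} (h : StandingAssumptions L ltS zeroS succS T Fg)
    (hM : M ⊨ T) {φ : L.Formula (Fin k ⊕ Fin 1)} (hφ : IsBig L Fg M φ a) :
    ∃ y₁ y₂ : M, y₁ ≠ y₂ ∧ φ.Realize (Sum.elim a fun _ => y₁) ∧
      φ.Realize (Sum.elim a fun _ => y₂) := by
  obtain ⟨N, _, e, hsat, hw⟩ := hφ
  have hN := (e.theory_model_iff T).1 hM
  have := h.infinite N hN
  obtain ⟨hFg, -⟩ := h.2.2 N hN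
  exact hw.exists_ne_realize hsat hFg

end IsBig

/-- Under the standing assumptions, `Γ^sind_F`-bigness is a notion of
bigness for `T`: (1) it is monotone; (2) if `φ ∨ ψ` is big then `φ` is big or `ψ` is
big; (3) a big formula has at least two solutions in `M`; (4) `x = x` is big. -/
theorem isBig_is_notion_of_bigness
    (L : FirstOrder.Language.{0, 0}) (ltS : L.Relations 2) (zeroS : L.Constants)
    (succS : L.Functions 1) (T : L.Theory) (Fg : L.Formula (Fin 3))
    (h : StandingAssumptions L ltS zeroS succS T Fg)
    (M : Type) [L.Structure M] (hM : M ⊨ T) (k : ℕ) (a : Fin k → M) :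
    (∀ φ ψ : L.Formula (Fin k ⊕ Fin 1),
      (∀ x : M, Formula.Realize φ (Sum.elim a fun _ => x) →
        Formula.Realize ψ (Sum.elim a fun _ => x)) →
      IsBig L Fg M φ a → IsBig L Fg M ψ a) ∧
    (∀ φ ψ : L.Formula (Fin k ⊕ Fin 1),
      IsBig L Fg M (φ ⊔ ψ) a → IsBig L Fg M φ a ∨ IsBig L Fg M ψ a) ∧
    (∀ φ : L.Formula (Fin k ⊕ Fin 1), IsBig L Fg M φ a →
      ∃ x y : M, x ≠ y ∧ Formula.Realize φ (Sum.elim a fun _ => x) ∧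
        Formula.Realize φ (Sum.elim a fun _ => y)) ∧
    IsBig L Fg M
      (Term.equal (Term.var (Sum.inr 0)) (Term.var (Sum.inr (0 : Fin 1)))) a := by
  refine ⟨fun φ ψ himp hφ => hφ.mono himp, fun φ ψ hbig => hbig.or_of_sup,
    fun φ hφ => hφ.exists_ne_realize h hM,
    h.isBig_of_forall_realize hM fun _ => Formula.realize_equal.2 rfl⟩
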